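/- arXiv:2311.08478 — 3 statements merged into one kernel-verified Lean document; each statement's English description precedes it below -/
import Mathlib

section
/- Let A ∈ ℝ^{N×N} be a Hurwitz matrix (every eigenvalue of A has strictly negative real part) and B ∈ ℝ^{N×p}. Then the matrix P = ∫₀^∞ exp(tA) · B·Bᵀ · exp(tAᵀ) dt is well defined (the integral converges) and solves the controllability Lyapunov equation A·P + P·Aᵀ = −B·Bᵀ. -/
open Matrix MeasureTheory NormedSpace

attribute [local instance] Matrix.normedAddCommGroup Matrix.normedSpace

set_option synthInstance.maxHeartbeats 1000000
set_option maxHeartbeats 1000000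

/-- `A` is Hurwitz if every eigenvalue of `A` over `ℂ` has negative real part. -/
def IsHurwitz {N : ℕ} (A : Matrix (Fin N) (Fin N) ℝ) : Prop :=
  ∀ μ ∈ spectrum ℂ (A.map (Complex.ofReal)), μ.re < 0

/-- polynomial times decaying exponential is bounded on `[0,∞)` -/
lemma aux_poly_exp_bounded (k : ℕ) {a : ℝ} (ha : 0 < a) :
    ∃ C ≥ 0, ∀ t : ℝ, 0 ≤ t → t ^ k * Real.exp (-(a * t)) ≤ C := by
  have h1 : Filter.Tendsto (fun t : ℝ => t ^ k * Real.exp (-(a * t))) Filter.atTop (nhds 0) := by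
    have h2 : Filter.Tendsto (fun t : ℝ => a * t) Filter.atTop Filter.atTop :=
      Filter.Tendsto.const_mul_atTop ha Filter.tendsto_id
    have h3 := (Real.tendsto_pow_mul_exp_neg_atTop_nhds_zero k).comp h2
    have h4 : Filter.Tendsto (fun t : ℝ => (a * t) ^ k * Real.exp (-(a * t)))
        Filter.atTop (nhds 0) := h3
    have h5 := h4.const_mul ((a ^ k)⁻¹)
    rw [mul_zero] at h5
    refine h5.congr fun t => ?_
    field_simp [mul_pow]
    ring
  have h6 : ∀ᶠ t : ℝ in Filter.atTop, t ^ k * Real.exp (-(a * t)) ≤ 1 := by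
    have := h1.eventually (eventually_le_nhds (by norm_num : (0:ℝ) < 1))
    exact this
  obtain ⟨T, hT⟩ := h6.exists_forall_of_atTop
  have hc : ContinuousOn (fun t : ℝ => t ^ k * Real.exp (-(a * t))) (Set.Icc 0 T) :=
    (continuous_pow k).continuousOn.mul (Real.continuous_exp.comp (by continuity)).continuousOn
  obtain ⟨C₀, hC₀⟩ := (isCompact_Icc (a := (0:ℝ)) (b := T)).exists_bound_of_continuousOn hc
  refine ⟨max C₀ 1, le_trans zero_le_one (le_max_right _ _), fun t ht => ?_⟩
  rcases le_or_gt t T with h | h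
  · calc t ^ k * Real.exp (-(a * t)) ≤ ‖t ^ k * Real.exp (-(a * t))‖ := le_abs_self _
    _ ≤ C₀ := hC₀ t ⟨ht, h⟩
    _ ≤ max C₀ 1 := le_max_left _ _
  · exact le_trans (hT t h.le) (le_max_right _ _)

/-- combining finitely many exponential decay estimates -/
lemma aux_decay_sum {ι : Type*} (s : Finset ι) (g : ι → ℝ → ℝ)
    (h : ∀ i ∈ s, ∃ C ≥ 0, ∃ ε > 0, ∀ t : ℝ, 0 ≤ t → g i t ≤ C * Real.exp (-(ε * t))) :
    ∃ C ≥ 0, ∃ ε > 0, ∀ t : ℝ, 0 ≤ t → (∑ i ∈ s, g i t) ≤ C * Real.exp (-(ε * t)) := by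
  classical
  induction s using Finset.induction_on with
  | empty => exact ⟨0, le_refl 0, 1, one_pos, fun t _ => by simp⟩
  | insert a s hnotmem ih =>
    obtain ⟨Ca, hCa, εa, hεa, ha⟩ := h a (Finset.mem_insert_self a s)
    obtain ⟨Cs, hCs, εs, hεs, hs⟩ := ih fun i hi => h i (Finset.mem_insert_of_mem hi)
    refine ⟨Ca + Cs, by positivity, min εa εs, lt_min hεa hεs, fun t ht => ?_⟩
    rw [Finset.sum_insert hnotmem, add_mul]
    have e1 : Real.exp (-(εa * t)) ≤ Real.exp (-(min εa εs * t)) := by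
      apply Real.exp_le_exp.2; nlinarith [min_le_left εa εs]
    have e2 : Real.exp (-(εs * t)) ≤ Real.exp (-(min εa εs * t)) := by
      apply Real.exp_le_exp.2; nlinarith [min_le_right εa εs]
    have := ha t ht
    have := hs t ht
    nlinarith [Real.exp_pos (-(εa * t)), Real.exp_pos (-(εs * t))]

section CLM
variable {K : Type*} [RCLike K] {n : ℕ}

noncomputable def toCLM (M : Matrix (Fin n) (Fin n) K) : (Fin n → K) →L[K] (Fin n → K) :=
  LinearMap.toContinuousLinearMap M.mulVecLin

lemma toCLM_apply (M : Matrix (Fin n) (Fin n) K) (v : Fin n → K) : toCLM M v = M.mulVec v := by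
  simp [toCLM]

noncomputable def toCLMLin : Matrix (Fin n) (Fin n) K →ₗ[K] ((Fin n → K) →L[K] (Fin n → K)) where
  toFun := toCLM
  map_add' M P := by ext v i; simp [toCLM_apply, Matrix.add_mulVec]
  map_smul' c M := by ext v i; simp [toCLM_apply, Matrix.smul_mulVec]

noncomputable def toCLMRing : Matrix (Fin n) (Fin n) K →+* ((Fin n → K) →L[K] (Fin n → K)) where
  toFun := toCLM
  map_one' := by ext v i; simp [toCLM_apply]
  map_mul' M P := by ext v i; simp [toCLM_apply, Matrix.mulVec_mulVec]
  map_zero' := by ext v i; simp [toCLM_apply]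
  map_add' M P := by ext v i; simp [toCLM_apply, Matrix.add_mulVec]

lemma continuous_toCLM : Continuous (toCLM (K := K) (n := n)) :=
  (toCLMLin (K := K) (n := n)).continuous_of_finiteDimensional

lemma toCLM_exp (M : Matrix (Fin n) (Fin n) K) : toCLM (exp M) = exp (toCLM M) := by
  letI : SeminormedRing (Matrix (Fin n) (Fin n) K) := Matrix.linftyOpSemiNormedRing
  letI : NormedRing (Matrix (Fin n) (Fin n) K) := Matrix.linftyOpNormedRing
  letI : NormedAlgebra K (Matrix (Fin n) (Fin n) K) := Matrix.linftyOpNormedAlgebra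
  letI : NormedAlgebra ℚ (Matrix (Fin n) (Fin n) K) := Matrix.linftyOpNormedAlgebra
  haveI : @CompleteSpace (Matrix (Fin n) (Fin n) K)
      (PseudoMetricSpace.toUniformSpace (self := SeminormedRing.toPseudoMetricSpace)) :=
    FiniteDimensional.complete K _
  exact map_exp (toCLMRing (K := K) (n := n)) continuous_toCLM M

lemma toCLM_smul (c : K) (M : Matrix (Fin n) (Fin n) K) : toCLM (c • M) = c • toCLM M :=
  (toCLMLin (K := K)).map_smul c M

end CLM

lemma aux_exp_algebraMap_clm (n : ℕ) (c : ℂ) :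
    exp (algebraMap ℂ ((Fin n → ℂ) →L[ℂ] (Fin n → ℂ)) c)
      = Complex.exp c • (1 : (Fin n → ℂ) →L[ℂ] (Fin n → ℂ)) := by
  have hmap := map_exp (algebraMap ℂ ((Fin n → ℂ) →L[ℂ] (Fin n → ℂ)))
    (continuous_algebraMap _ _) c
  rw [← hmap, Algebra.algebraMap_eq_smul_one, ← Complex.exp_eq_exp_ℂ]

lemma aux_smul_one_commute (n : ℕ) (c : ℂ) (T : (Fin n → ℂ) →L[ℂ] (Fin n → ℂ)) :
    Commute (c • (1 : (Fin n → ℂ) →L[ℂ] (Fin n → ℂ))) T := by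
  show _ * _ = _ * _
  ext v
  simp [ContinuousLinearMap.mul_apply]

lemma aux_smul_one_mul (n : ℕ) (c : ℂ) (T : (Fin n → ℂ) →L[ℂ] (Fin n → ℂ)) :
    (c • (1 : (Fin n → ℂ) →L[ℂ] (Fin n → ℂ))) * T = c • T := by
  ext v; simp [ContinuousLinearMap.mul_apply]

lemma aux_exp_smul_one (n : ℕ) (c : ℂ) :
    exp (c • (1 : (Fin n → ℂ) →L[ℂ] (Fin n → ℂ)))
      = Complex.exp c • (1 : (Fin n → ℂ) →L[ℂ] (Fin n → ℂ)) := by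
  have := aux_exp_algebraMap_clm n c
  rwa [Algebra.algebraMap_eq_smul_one] at this

lemma aux_smul_pow_apply {n : ℕ} (c : ℂ) (T : (Fin n → ℂ) →L[ℂ] (Fin n → ℂ)) (m : ℕ)
    (v : Fin n → ℂ) : ((c • T) ^ m) v = c ^ m • ((T ^ m) v) := by
  induction m generalizing v with
  | zero => simp
  | succ m ih =>
    have h1 : ((c • T) ^ (m + 1)) v = ((c • T) ^ m) ((c • T) v) := by rw [pow_succ]; rfl
    have h2 : (T ^ (m + 1)) v = (T ^ m) (T v) := by rw [pow_succ]; rfl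
    rw [h1, h2, ContinuousLinearMap.smul_apply, _root_.map_smul, ih (T v), smul_smul,
      pow_succ, mul_comm]

lemma eigen_decay {n : ℕ} (M : Matrix (Fin n) (Fin n) ℂ) (μ : ℂ) (hμ : μ.re < 0)
    (w : Fin n → ℂ) (hw : w ∈ Module.End.maxGenEigenspace (Matrix.mulVecLin M) μ) :
    ∃ C ≥ 0, ∃ ε > 0, ∀ t : ℝ, 0 ≤ t →
      ‖exp ((t : ℂ) • toCLM M) w‖ ≤ C * Real.exp (-(ε * t)) := by
  obtain ⟨k, hk⟩ := (Module.End.mem_maxGenEigenspace _ _ _).mp hw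
  set L := toCLM M with hL
  set Nc : (Fin n → ℂ) →L[ℂ] (Fin n → ℂ) := L - μ • 1 with hNc
  have hpow : ∀ (m : ℕ) (v : Fin n → ℂ),
      (Nc ^ m) v = (((Matrix.mulVecLin M) - μ • (1 : Module.End ℂ (Fin n → ℂ))) ^ m) v := by
    intro m
    induction m with
    | zero => intro v; simp
    | succ m ih =>
      intro v
      rw [pow_succ, pow_succ]
      have h1 : ((Nc ^ m) * Nc) v = (Nc ^ m) (Nc v) := rfl
      have h2 : Nc v = ((Matrix.mulVecLin M) - μ • (1 : Module.End ℂ (Fin n → ℂ))) v := by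
        simp [hNc, hL, toCLM_apply, Matrix.mulVecLin_apply]
      rw [h1, h2, ih]
      rfl
  have hNk : ∀ m : ℕ, k ≤ m → (Nc ^ m) w = 0 := by
    intro m hm
    rw [hpow]
    have : m = (m - k) + k := (Nat.sub_add_cancel hm).symm
    rw [this, pow_add, Module.End.mul_apply, hk, map_zero]
  -- split the exponential
  have hsplit : ∀ t : ℝ, exp ((t : ℂ) • L) =
      Complex.exp ((t : ℂ) * μ) • exp ((t : ℂ) • Nc) := by
    intro t
    have hdec : (t : ℂ) • L = (((t : ℂ) * μ) • (1 : (Fin n → ℂ) →L[ℂ] (Fin n → ℂ)))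
        + (t : ℂ) • Nc := by
      rw [hNc, smul_sub, smul_smul]
      abel
    letI : NormedAlgebra ℚ ((Fin n → ℂ) →L[ℂ] (Fin n → ℂ)) := NormedAlgebra.restrictScalars ℚ ℂ _
    rw [hdec, NormedSpace.exp_add_of_commute (aux_smul_one_commute n _ _), aux_exp_smul_one,
      aux_smul_one_mul]
  -- the series is a finite sum on w
  have hser : ∀ t : ℝ, exp ((t : ℂ) • Nc) w =
      ∑ m ∈ Finset.range k, (((t : ℂ) ^ m) * ((m.factorial : ℂ))⁻¹) • ((Nc ^ m) w) := by
    intro t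
    have hs : Summable (fun m : ℕ => ((m.factorial : ℂ))⁻¹ • ((t : ℂ) • Nc) ^ m) :=
      expSeries_summable' ((t : ℂ) • Nc)
    have happ := (ContinuousLinearMap.apply ℂ (Fin n → ℂ) w).map_tsum hs
    rw [exp_eq_tsum ℂ]
    calc (∑' m : ℕ, ((m.factorial : ℂ))⁻¹ • ((t : ℂ) • Nc) ^ m) w
        = ∑' m : ℕ, (((m.factorial : ℂ))⁻¹ • ((t : ℂ) • Nc) ^ m) w := happ
      _ = ∑ m ∈ Finset.range k, (((m.factorial : ℂ))⁻¹ • ((t : ℂ) • Nc) ^ m) w := by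
          refine tsum_eq_sum fun m hm => ?_
          have hkm : k ≤ m := by
            by_contra hcon
            exact hm (Finset.mem_range.mpr (lt_of_not_ge hcon))
          rw [ContinuousLinearMap.smul_apply, aux_smul_pow_apply, hNk m hkm, smul_zero,
            smul_zero]
      _ = ∑ m ∈ Finset.range k, (((t : ℂ) ^ m) * ((m.factorial : ℂ))⁻¹) • ((Nc ^ m) w) := by
          refine Finset.sum_congr rfl fun m _ => ?_
          rw [ContinuousLinearMap.smul_apply, aux_smul_pow_apply, smul_smul]
          congr 1
          ring
  -- final bound
  set ε : ℝ := -μ.re / 2 with hε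
  have hεpos : 0 < ε := by rw [hε]; linarith
  -- per-term constants
  have hterms : ∀ m : ℕ, ∃ C ≥ 0, ∀ t : ℝ, 0 ≤ t →
      Real.exp (μ.re * t) * (t ^ m * ((m.factorial : ℝ))⁻¹ * ‖(Nc ^ m) w‖)
        ≤ C * Real.exp (-(ε * t)) := by
    intro m
    obtain ⟨Cm, hCm0, hCm⟩ := aux_poly_exp_bounded m hεpos
    refine ⟨Cm * (((m.factorial : ℝ))⁻¹ * ‖(Nc ^ m) w‖), by positivity, fun t ht => ?_⟩
    have key : Real.exp (μ.re * t) = Real.exp (-(ε * t)) * Real.exp (-(ε * t)) := by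
      rw [← Real.exp_add]; congr 1; rw [hε]; ring
    rw [key]
    have h1 : t ^ m * Real.exp (-(ε * t)) ≤ Cm := hCm t ht
    calc Real.exp (-(ε * t)) * Real.exp (-(ε * t)) * (t ^ m * ((m.factorial : ℝ))⁻¹ * ‖(Nc ^ m) w‖)
        = (t ^ m * Real.exp (-(ε * t))) *
            (((m.factorial : ℝ))⁻¹ * ‖(Nc ^ m) w‖ * Real.exp (-(ε * t))) := by ring
      _ ≤ Cm * (((m.factorial : ℝ))⁻¹ * ‖(Nc ^ m) w‖ * Real.exp (-(ε * t))) :=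
          mul_le_mul_of_nonneg_right h1 (by positivity)
      _ = Cm * (((m.factorial : ℝ))⁻¹ * ‖(Nc ^ m) w‖) * Real.exp (-(ε * t)) := by ring
  -- choose constants for each m < k and sum up
  choose Cf hCf0 hCf using hterms
  refine ⟨∑ m ∈ Finset.range k, Cf m, Finset.sum_nonneg fun m _ => hCf0 m, ε, hεpos, fun t ht => ?_⟩
  have hb : ‖exp ((t : ℂ) • L) w‖ ≤
      ∑ m ∈ Finset.range k, Real.exp (μ.re * t) * (t ^ m * ((m.factorial : ℝ))⁻¹ * ‖(Nc ^ m) w‖) := by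
    rw [hsplit t]
    rw [ContinuousLinearMap.smul_apply, norm_smul, Complex.norm_exp]
    have hre : ((t : ℂ) * μ).re = μ.re * t := by simp [mul_comm]
    rw [hre, hser t]
    have hnorm_sum : ‖∑ m ∈ Finset.range k, (((t : ℂ) ^ m) * ((m.factorial : ℂ))⁻¹) • ((Nc ^ m) w)‖
        ≤ ∑ m ∈ Finset.range k, t ^ m * ((m.factorial : ℝ))⁻¹ * ‖(Nc ^ m) w‖ := by
      refine (norm_sum_le _ _).trans (le_of_eq (Finset.sum_congr rfl fun m _ => ?_))
      rw [norm_smul, norm_mul, norm_pow, norm_inv, Complex.norm_real, Complex.norm_natCast,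
        Real.norm_eq_abs, abs_of_nonneg ht]
    calc Real.exp (μ.re * t) * ‖∑ m ∈ Finset.range k, (((t : ℂ) ^ m) * ((m.factorial : ℂ))⁻¹) • ((Nc ^ m) w)‖
        ≤ Real.exp (μ.re * t) * ∑ m ∈ Finset.range k, t ^ m * ((m.factorial : ℝ))⁻¹ * ‖(Nc ^ m) w‖ :=
          mul_le_mul_of_nonneg_left hnorm_sum (Real.exp_pos _).le
      _ = ∑ m ∈ Finset.range k, Real.exp (μ.re * t) * (t ^ m * ((m.factorial : ℝ))⁻¹ * ‖(Nc ^ m) w‖) := by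
          rw [Finset.mul_sum]
  calc ‖exp ((t : ℂ) • L) w‖ ≤ _ := hb
    _ ≤ ∑ m ∈ Finset.range k, Cf m * Real.exp (-(ε * t)) :=
        Finset.sum_le_sum fun m _ => hCf m t ht
    _ = (∑ m ∈ Finset.range k, Cf m) * Real.exp (-(ε * t)) := by rw [Finset.sum_mul]

lemma vector_decay {n : ℕ} (M : Matrix (Fin n) (Fin n) ℂ)
    (hM : ∀ μ ∈ spectrum ℂ M, μ.re < 0) (v : Fin n → ℂ) :
    ∃ C ≥ 0, ∃ ε > 0, ∀ t : ℝ, 0 ≤ t →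
      ‖exp ((t : ℂ) • toCLM M) v‖ ≤ C * Real.exp (-(ε * t)) := by
  have hspec : spectrum ℂ (Matrix.mulVecLin M) = spectrum ℂ M := by
    have heq : Matrix.mulVecLin M = Matrix.toLinAlgEquiv' M := by
      ext v
      simp [Matrix.mulVecLin_apply, Matrix.toLinAlgEquiv'_apply]
    rw [heq]
    exact AlgEquiv.spectrum_eq (Matrix.toLinAlgEquiv' (R := ℂ) (n := Fin n)) M
  have hv : v ∈ ⨆ μ, Module.End.maxGenEigenspace (Matrix.mulVecLin M) μ := by
    rw [Module.End.iSup_maxGenEigenspace_eq_top]; trivial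
  obtain ⟨d, hd, hsum⟩ := (Submodule.mem_iSup_iff_exists_finsupp _ _).mp hv
  obtain ⟨C, hC, ε, hε, hb⟩ := aux_decay_sum d.support
      (fun μ t => ‖exp ((t : ℂ) • toCLM M) (d μ)‖) (by
    intro μ hμs
    have hμ0 : d μ ≠ 0 := Finsupp.mem_support_iff.mp hμs
    have hue : Module.End.HasUnifEigenvalue (Matrix.mulVecLin M) μ ⊤ :=
      Submodule.ne_bot_iff _ |>.mpr ⟨d μ, hd μ, hμ0⟩
    have heig : Module.End.HasEigenvalue (Matrix.mulVecLin M) μ :=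
      hue.lt (by norm_num)
    have hmem : μ ∈ spectrum ℂ M := by
      rw [← hspec]
      exact Module.End.hasEigenvalue_iff_mem_spectrum.mp heig
    exact eigen_decay M μ (hM μ hmem) (d μ) (hd μ))
  refine ⟨C, hC, ε, hε, fun t ht => ?_⟩
  calc ‖exp ((t : ℂ) • toCLM M) v‖
      = ‖∑ μ ∈ d.support, exp ((t : ℂ) • toCLM M) (d μ)‖ := by
        rw [← hsum, Finsupp.sum, map_sum]
    _ ≤ ∑ μ ∈ d.support, ‖exp ((t : ℂ) • toCLM M) (d μ)‖ := norm_sum_le _ _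
    _ ≤ C * Real.exp (-(ε * t)) := hb t ht

noncomputable def mapCLin {n : ℕ} : Matrix (Fin n) (Fin n) ℝ →ₗ[ℝ] Matrix (Fin n) (Fin n) ℂ where
  toFun P := P.map Complex.ofReal
  map_add' P Q := by ext i j; simp
  map_smul' c P := by ext i j; simp [Complex.real_smul]

lemma aux_map_exp {n : ℕ} (M : Matrix (Fin n) (Fin n) ℝ) :
    (exp M).map Complex.ofReal = exp (M.map Complex.ofReal) := by
  letI : SeminormedRing (Matrix (Fin n) (Fin n) ℝ) := Matrix.linftyOpSemiNormedRing
  letI : NormedRing (Matrix (Fin n) (Fin n) ℝ) := Matrix.linftyOpNormedRing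
  letI : NormedAlgebra ℝ (Matrix (Fin n) (Fin n) ℝ) := Matrix.linftyOpNormedAlgebra
  letI : NormedAlgebra ℚ (Matrix (Fin n) (Fin n) ℝ) := Matrix.linftyOpNormedAlgebra
  haveI : @CompleteSpace (Matrix (Fin n) (Fin n) ℝ)
      (PseudoMetricSpace.toUniformSpace (self := SeminormedRing.toPseudoMetricSpace)) :=
    FiniteDimensional.complete ℝ _
  letI : SeminormedRing (Matrix (Fin n) (Fin n) ℂ) := Matrix.linftyOpSemiNormedRing
  letI : NormedRing (Matrix (Fin n) (Fin n) ℂ) := Matrix.linftyOpNormedRing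
  letI : NormedAlgebra ℝ (Matrix (Fin n) (Fin n) ℂ) := Matrix.linftyOpNormedAlgebra
  have hcont : Continuous (Complex.ofRealHom.mapMatrix :
      Matrix (Fin n) (Fin n) ℝ →+* Matrix (Fin n) (Fin n) ℂ) := by
    have : (Complex.ofRealHom.mapMatrix :
        Matrix (Fin n) (Fin n) ℝ →+* Matrix (Fin n) (Fin n) ℂ).toFun = mapCLin.toFun := rfl
    exact mapCLin.continuous_of_finiteDimensional
  exact map_exp Complex.ofRealHom.mapMatrix hcont M

lemma matrix_decay {n : ℕ} (A : Matrix (Fin n) (Fin n) ℝ)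
    (hA : ∀ μ ∈ spectrum ℂ (A.map (Complex.ofReal)), μ.re < 0) :
    ∃ C ≥ 0, ∃ ε > 0, ∀ t : ℝ, 0 ≤ t →
      ‖exp (t • A)‖ ≤ C * Real.exp (-(ε * t)) := by
  set A' : Matrix (Fin n) (Fin n) ℂ := A.map Complex.ofReal with hA'
  obtain ⟨C, hC, ε, hε, hb⟩ := aux_decay_sum (Finset.univ : Finset (Fin n))
      (fun j t => ‖exp ((t : ℂ) • toCLM A') (Pi.single j 1)‖)
      (fun j _ => vector_decay A' hA (Pi.single j 1))
  refine ⟨C, hC, ε, hε, fun t ht => ?_⟩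
  have key : ∀ i j : Fin n, ((exp (t • A)) i j : ℂ) =
      (exp ((t : ℂ) • toCLM A') (Pi.single j 1)) i := by
    intro i j
    have h1 : exp ((t : ℂ) • toCLM A') = toCLM (exp ((t : ℂ) • A')) := by
      rw [toCLM_exp, toCLM_smul]
    have h2 : ((t • A).map Complex.ofReal) = (t : ℂ) • A' := by
      ext i' j'; simp [hA', Complex.real_smul]
    have h3 : exp ((t : ℂ) • A') = exp ((t : ℂ) • A') :=
      rfl
    calc ((exp (t • A)) i j : ℂ) = ((exp (t • A)).map Complex.ofReal) i j := rfl
      _ = (exp ((t • A).map Complex.ofReal)) i j := by rw [aux_map_exp]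
      _ = (exp ((t : ℂ) • A')) i j := by rw [h2, h3]
      _ = ((exp ((t : ℂ) • A')).mulVec (Pi.single j 1)) i := by
          rw [Matrix.mulVec_single_one]; rfl
      _ = (exp ((t : ℂ) • toCLM A') (Pi.single j 1)) i := by rw [h1, toCLM_apply]
  have hbound : ‖exp (t • A)‖ ≤
      ∑ j : Fin n, ‖exp ((t : ℂ) • toCLM A') (Pi.single j 1)‖ := by
    have hnn : (0:ℝ) ≤ ∑ j : Fin n, ‖exp ((t : ℂ) • toCLM A') (Pi.single j 1)‖ :=
      Finset.sum_nonneg fun j _ => norm_nonneg _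
    rw [Matrix.norm_le_iff hnn]
    intro i j
    have h4 : ‖(exp (t • A)) i j‖ = ‖(exp ((t : ℂ) • toCLM A') (Pi.single j 1)) i‖ := by
      rw [← key i j, Complex.norm_real]
    rw [h4]
    exact le_trans (norm_le_pi_norm _ i)
      (Finset.single_le_sum
        (f := fun j' : Fin n => ‖exp ((t : ℂ) • toCLM A') (Pi.single j' 1)‖)
        (fun j' _ => norm_nonneg _) (Finset.mem_univ j))
  exact hbound.trans (hb t ht)

/-- entrywise derivative of the matrix exponential -/
lemma hasDerivAt_exp_entry (A : Matrix (Fin n) (Fin n) ℝ) (t : ℝ) (i j : Fin n) :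
    HasDerivAt (fun s : ℝ => exp (s • A) i j) ((A * exp (t • A)) i j) t := by
  set LA := toCLM A with hLA
  have h1 : HasDerivAt (fun s : ℝ => exp (s • LA)) (LA * exp (t • LA)) t :=
    hasDerivAt_exp_smul_const' LA t
  set ev : ((Fin n → ℝ) →L[ℝ] (Fin n → ℝ)) →L[ℝ] ℝ :=
    (ContinuousLinearMap.proj i).comp
      (ContinuousLinearMap.apply ℝ (Fin n → ℝ) (Pi.single j 1)) with hev
  have h2 := ev.hasFDerivAt.comp_hasDerivAt t h1
  have hrepr : ∀ s : ℝ, exp (s • LA) = toCLM (exp (s • A)) := fun s => by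
    rw [toCLM_exp, toCLM_smul]
  have hev_apply : ∀ M : Matrix (Fin n) (Fin n) ℝ, ev (toCLM M) = M i j := by
    intro M
    show (toCLM M (Pi.single j 1)) i = M i j
    rw [toCLM_apply, Matrix.mulVec_single_one]
    rfl
  have hfun : (fun s : ℝ => ev (exp (s • LA))) = fun s : ℝ => exp (s • A) i j := by
    funext s
    rw [hrepr s, hev_apply]
  have hval : ev (LA * exp (t • LA)) = (A * exp (t • A)) i j := by
    rw [hrepr t, hLA]
    have : toCLM A * toCLM (exp (t • A)) = toCLM (A * exp (t • A)) := by
      ext v k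
      simp [ContinuousLinearMap.mul_apply, toCLM_apply, Matrix.mulVec_mulVec]
    rw [this, hev_apply]
  have h3 : HasDerivAt (fun s => ev (exp (s • LA))) (ev (LA * exp (t • LA))) t := h2
  rw [hfun, hval] at h3
  exact h3

/-- matrix-level derivative -/
lemma hasDerivAt_exp_matrix (A : Matrix (Fin n) (Fin n) ℝ) (t : ℝ) :
    HasDerivAt (fun s : ℝ => exp (s • A)) (A * exp (t • A)) t := by
  refine hasDerivAt_pi.mpr ?_
  intro i
  refine hasDerivAt_pi.mpr ?_
  intro j
  exact hasDerivAt_exp_entry A t i j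

/-- right-multiplication as CLM -/
noncomputable def rCLM (M : Matrix (Fin n) (Fin n) ℝ) :
    Matrix (Fin n) (Fin n) ℝ →L[ℝ] Matrix (Fin n) (Fin n) ℝ :=
  LinearMap.toContinuousLinearMap
    { toFun := fun X => X * M
      map_add' := fun X Y => add_mul X Y M
      map_smul' := fun c X => by simp [Matrix.smul_mul] }

@[simp] lemma rCLM_apply (M X : Matrix (Fin n) (Fin n) ℝ) : rCLM M X = X * M := rfl

/-- left-multiplication as CLM -/
noncomputable def lCLM (M : Matrix (Fin n) (Fin n) ℝ) :
    Matrix (Fin n) (Fin n) ℝ →L[ℝ] Matrix (Fin n) (Fin n) ℝ :=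
  LinearMap.toContinuousLinearMap
    { toFun := fun X => M * X
      map_add' := fun X Y => mul_add M X Y
      map_smul' := fun c X => by simp [Matrix.mul_smul] }

@[simp] lemma lCLM_apply (M X : Matrix (Fin n) (Fin n) ℝ) : lCLM M X = M * X := rfl

/-- multiplication as a CLM-valued CLM -/
noncomputable def mulCLM :
    Matrix (Fin n) (Fin n) ℝ →L[ℝ] @ContinuousLinearMap ℝ ℝ _ _ (RingHom.id ℝ) (Matrix (Fin n) (Fin n) ℝ)
      PseudoMetricSpace.toUniformSpace.toTopologicalSpace _ (Matrix (Fin n) (Fin n) ℝ)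
      PseudoMetricSpace.toUniformSpace.toTopologicalSpace _ _ _ :=
  LinearMap.toContinuousLinearMap
    { toFun := lCLM
      map_add' := fun X Y => by ext Z i j; simp [add_mul]; rfl
      map_smul' := fun c X => by ext Z i j; simp [Matrix.smul_mul]; rfl
        }

@[simp] lemma mulCLM_apply (X Y : Matrix (Fin n) (Fin n) ℝ) : mulCLM X Y = X * Y := rfl

/-- transpose as CLM -/
noncomputable def trCLM :
    Matrix (Fin n) (Fin n) ℝ →L[ℝ] Matrix (Fin n) (Fin n) ℝ :=
  LinearMap.toContinuousLinearMap
    { toFun := fun X => Xᵀ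
      map_add' := fun X Y => Matrix.transpose_add X Y
      map_smul' := fun c X => Matrix.transpose_smul c X }

@[simp] lemma trCLM_apply (X : Matrix (Fin n) (Fin n) ℝ) : trCLM X = Xᵀ := rfl

lemma hasDerivAt_gramian (A C : Matrix (Fin n) (Fin n) ℝ) (t : ℝ) :
    HasDerivAt (fun s : ℝ => exp (s • A) * C * (exp (s • A))ᵀ)
      (A * (exp (t • A) * C * (exp (t • A))ᵀ)
        + (exp (t • A) * C * (exp (t • A))ᵀ) * Aᵀ) t := by
  have he := hasDerivAt_exp_matrix A t
  have heT : HasDerivAt (fun s : ℝ => (exp (s • A))ᵀ) ((A * exp (t • A))ᵀ) t := by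
    have h := (trCLM.hasFDerivAt.comp_hasDerivAt t he :)
    exact h
  have hu : HasDerivAt (fun s : ℝ => exp (s • A) * C) (A * exp (t • A) * C) t := by
    have h := ((rCLM C).hasFDerivAt.comp_hasDerivAt t he :)
    exact h
  have hc : HasDerivAt (fun s : ℝ => mulCLM (exp (s • A) * C)) (mulCLM (A * exp (t • A) * C)) t := by
    have h := ((mulCLM.hasFDerivAt (x := exp (t • A) * C)).comp_hasDerivAt t hu :)
    exact h
  have hf0 := hc.clm_apply heT
  have hval : mulCLM (A * exp (t • A) * C) ((exp (t • A))ᵀ)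
      + mulCLM (exp (t • A) * C) ((A * exp (t • A))ᵀ)
      = A * (exp (t • A) * C * (exp (t • A))ᵀ)
        + (exp (t • A) * C * (exp (t • A))ᵀ) * Aᵀ := by
    rw [mulCLM_apply, mulCLM_apply, Matrix.transpose_mul]
    simp only [mul_assoc]
  rw [← hval]
  exact hf0

lemma aux_norm_transpose (X : Matrix (Fin n) (Fin n) ℝ) : ‖Xᵀ‖ = ‖X‖ := by
  refine le_antisymm ?_ ?_ <;> rw [Matrix.norm_le_iff (norm_nonneg _)] <;> intro i j
  · exact Matrix.norm_entry_le_entrywise_sup_norm X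
  · exact Matrix.norm_entry_le_entrywise_sup_norm Xᵀ

lemma aux_norm_triple (X C0 Y : Matrix (Fin n) (Fin n) ℝ) :
    ‖X * C0 * Y‖ ≤ (n : ℝ)^2 * ‖C0‖ * ‖X‖ * ‖Y‖ := by
  have hXC : ∀ i l, ‖(X * C0) i l‖ ≤ (n : ℝ) * (‖X‖ * ‖C0‖) := by
    intro i l
    rw [Matrix.mul_apply]
    calc ‖∑ k, X i k * C0 k l‖ ≤ ∑ k, ‖X i k * C0 k l‖ := norm_sum_le _ _
      _ ≤ ∑ _k : Fin n, ‖X‖ * ‖C0‖ := Finset.sum_le_sum fun k _ => by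
          rw [norm_mul]
          exact mul_le_mul (Matrix.norm_entry_le_entrywise_sup_norm _)
            (Matrix.norm_entry_le_entrywise_sup_norm _) (norm_nonneg _) (norm_nonneg _)
      _ = (n : ℝ) * (‖X‖ * ‖C0‖) := by
          rw [Finset.sum_const, Finset.card_univ, Fintype.card_fin, nsmul_eq_mul]
  rw [Matrix.norm_le_iff (by positivity)]
  intro i j
  rw [Matrix.mul_apply]
  calc ‖∑ l, (X * C0) i l * Y l j‖ ≤ ∑ l, ‖(X * C0) i l * Y l j‖ := norm_sum_le _ _
    _ ≤ ∑ _l : Fin n, ((n : ℝ) * (‖X‖ * ‖C0‖)) * ‖Y‖ := Finset.sum_le_sum fun l _ => by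
        rw [norm_mul]
        exact mul_le_mul (hXC i l) (Matrix.norm_entry_le_entrywise_sup_norm _)
          (norm_nonneg _) (by positivity)
    _ = (n : ℝ)^2 * ‖C0‖ * ‖X‖ * ‖Y‖ := by
        rw [Finset.sum_const, Finset.card_univ, Fintype.card_fin, nsmul_eq_mul]
        ring

/-- If `A` is Hurwitz, the controllability Gramian
`P = ∫₀^∞ exp(tA)·B·Bᵀ·exp(tAᵀ) dt` is well defined (the integrand is
integrable on `(0,∞)`) and solves the Lyapunov equation
`A·P + P·Aᵀ = −B·Bᵀ`. -/
theorem gramian_integral_solves_lyapunov {N p : ℕ}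
    (A : Matrix (Fin N) (Fin N) ℝ) (hA : IsHurwitz A)
    (B : Matrix (Fin N) (Fin p) ℝ) :
    @IntegrableOn ℝ (Matrix (Fin N) (Fin N) ℝ) _ UniformSpace.toTopologicalSpace
      SeminormedAddGroup.toContinuousENorm
      (fun t : ℝ => NormedSpace.exp (t • A) * B * Bᵀ * NormedSpace.exp (t • Aᵀ)) (Set.Ioi 0) volume ∧
    A * (∫ t in Set.Ioi (0 : ℝ), NormedSpace.exp (t • A) * B * Bᵀ * NormedSpace.exp (t • Aᵀ)) +
        (∫ t in Set.Ioi (0 : ℝ), NormedSpace.exp (t • A) * B * Bᵀ * NormedSpace.exp (t • Aᵀ)) * Aᵀ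
      = -(B * Bᵀ) := by
  set Cm : Matrix (Fin N) (Fin N) ℝ := B * Bᵀ with hCm
  set f : ℝ → Matrix (Fin N) (Fin N) ℝ := fun t => exp (t • A) * Cm * (exp (t • A))ᵀ
    with hf
  have hfg : (fun t : ℝ => exp (t • A) * B * Bᵀ * exp (t • Aᵀ)) = f := by
    funext t
    rw [hf, hCm, Matrix.mul_assoc (exp (t • A)) B Bᵀ]
    congr 1
    rw [show t • Aᵀ = (t • A)ᵀ from (Matrix.transpose_smul t A).symm, Matrix.exp_transpose]
  obtain ⟨C₀, hC₀, ε₀, hε₀, hdecay⟩ := matrix_decay A hA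
  have hcont_f : Continuous f :=
    continuous_iff_continuousAt.mpr fun t => (hasDerivAt_gramian A Cm t).continuousAt
  set K : ℝ := (N : ℝ)^2 * ‖Cm‖ * (C₀ * C₀) with hK
  have hbound : ∀ t : ℝ, 0 ≤ t → ‖f t‖ ≤ K * Real.exp (-(2 * ε₀ * t)) := by
    intro t ht
    have h1 : ‖f t‖ ≤ (N : ℝ)^2 * ‖Cm‖ * ‖exp (t • A)‖ * ‖(exp (t • A))ᵀ‖ :=
      aux_norm_triple _ _ _
    rw [aux_norm_transpose] at h1
    have h2 := hdecay t ht
    have h3 : ‖exp (t • A)‖ * ‖exp (t • A)‖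
        ≤ (C₀ * Real.exp (-(ε₀ * t))) * (C₀ * Real.exp (-(ε₀ * t))) :=
      mul_le_mul h2 h2 (norm_nonneg _) (by positivity)
    have h4 : Real.exp (-(ε₀ * t)) * Real.exp (-(ε₀ * t)) = Real.exp (-(2 * ε₀ * t)) := by
      rw [← Real.exp_add]; congr 1; ring
    calc ‖f t‖ ≤ (N : ℝ)^2 * ‖Cm‖ * ‖exp (t • A)‖ * ‖exp (t • A)‖ := h1
      _ ≤ (N : ℝ)^2 * ‖Cm‖ * ((C₀ * Real.exp (-(ε₀ * t))) * (C₀ * Real.exp (-(ε₀ * t)))) := by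
          rw [mul_assoc ((N : ℝ)^2 * ‖Cm‖)]
          exact mul_le_mul_of_nonneg_left h3 (by positivity)
      _ = K * Real.exp (-(2 * ε₀ * t)) := by rw [hK, ← h4]; ring
  have hint_f : @IntegrableOn ℝ (Matrix (Fin N) (Fin N) ℝ) _ UniformSpace.toTopologicalSpace
      SeminormedAddGroup.toContinuousENorm f (Set.Ioi 0) volume := by
    haveI : TopologicalSpace.PseudoMetrizableSpace (Matrix (Fin N) (Fin N) ℝ) :=
      inferInstanceAs (TopologicalSpace.PseudoMetrizableSpace (Fin N → Fin N → ℝ))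
    refine Integrable.mono' ((exp_neg_integrableOn_Ioi 0 (by positivity : 0 < 2 * ε₀)).const_mul K)
      hcont_f.aestronglyMeasurable ?_
    rw [ae_restrict_iff' measurableSet_Ioi]
    exact ae_of_all _ fun t ht => by
      have := hbound t (le_of_lt ht)
      simpa [mul_assoc] using this
  have htendg : Filter.Tendsto (fun t : ℝ => K * Real.exp (-(2 * ε₀ * t)))
      Filter.atTop (nhds 0) := by
    have h1 : Filter.Tendsto (fun t : ℝ => 2 * ε₀ * t) Filter.atTop Filter.atTop :=
      Filter.Tendsto.const_mul_atTop (by positivity) Filter.tendsto_id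
    have h2 : Filter.Tendsto (fun t : ℝ => -(2 * ε₀ * t)) Filter.atTop Filter.atBot :=
      Filter.tendsto_neg_atTop_atBot.comp h1
    have h3 := Real.tendsto_exp_atBot.comp h2
    have h4 := h3.const_mul K
    rwa [mul_zero] at h4
  have htend : Filter.Tendsto f Filter.atTop (nhds 0) :=
    squeeze_zero_norm' ((Filter.eventually_ge_atTop 0).mono fun t ht => hbound t ht) htendg
  have hderiv : ∀ x ∈ Set.Ioi (0:ℝ), HasDerivAt f (A * f x + f x * Aᵀ) x :=
    fun x _ => hasDerivAt_gramian A Cm x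
  have hΦ : (fun t : ℝ => A * f t + f t * Aᵀ) = fun t => (lCLM A + rCLM Aᵀ) (f t) := by
    funext t; simp
  have hint_f' : @IntegrableOn ℝ (Matrix (Fin N) (Fin N) ℝ) _ UniformSpace.toTopologicalSpace
      SeminormedAddGroup.toContinuousENorm (fun t : ℝ => A * f t + f t * Aᵀ) (Set.Ioi 0) volume := by
    rw [hΦ]
    exact (lCLM A + rCLM Aᵀ).integrable_comp hint_f
  have hFTC := integral_Ioi_of_hasDerivAt_of_tendsto
    hcont_f.continuousWithinAt hderiv hint_f' htend
  have hf0 : f 0 = Cm := by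
    rw [hf]
    simp [zero_smul, exp_zero, Matrix.transpose_one]
  have hcomm := (lCLM A + rCLM Aᵀ).integral_comp_comm hint_f
  rw [hfg]
  refine ⟨hint_f, ?_⟩
  have heq : A * (∫ t in Set.Ioi (0:ℝ), f t) + (∫ t in Set.Ioi (0:ℝ), f t) * Aᵀ
      = ∫ t in Set.Ioi (0:ℝ), (A * f t + f t * Aᵀ) := by
    have h5 : A * (∫ t in Set.Ioi (0:ℝ), f t) + (∫ t in Set.Ioi (0:ℝ), f t) * Aᵀ
        = (lCLM A + rCLM Aᵀ) (∫ t in Set.Ioi (0:ℝ), f t) := by simp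
    rw [h5, hΦ]
    exact hcomm.symm
  rw [heq, hFTC, hf0, hCm]
  simp
end

section
/- Let P, Q ∈ ℝ^{N×N} be symmetric positive definite, with Cholesky-type square-root factors Z_P, Z_Q ∈ ℝ^{N×N} satisfying P = Z_P·Z_Pᵀ and Q = Z_Q·Z_Qᵀ, and let Z_Qᵀ·Z_P = U·Σ·Vᵀ be a singular value decomposition (U, V orthogonal, Σ diagonal with positive entries). Define T = Σ^{−1/2}·Uᵀ·Z_Qᵀ and S = Z_P·V·Σ^{−1/2}. Then T·S = I_N (so S = T⁻¹), and T balances the Gramians: T·P·Tᵀ = Σ and (T⁻¹)ᵀ·Q·T⁻¹ = Σ. -/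
open Matrix

/-- Square-root balancing: if `P = Z_P·Z_Pᵀ`, `Q = Z_Q·Z_Qᵀ`
are symmetric positive definite and `Z_Qᵀ·Z_P = U·Σ·Vᵀ` is an SVD (with `U, V`
orthogonal and `Σ = diag(d)`, `d > 0`), then `T = Σ^{−1/2}·Uᵀ·Z_Qᵀ` and
`S = Z_P·V·Σ^{−1/2}` satisfy `T·S = 1` (so `S = T⁻¹`), and `T` balances the
Gramians: `T·P·Tᵀ = Σ` and `(T⁻¹)ᵀ·Q·T⁻¹ = Σ`. -/
theorem square_root_balancing {N : ℕ}
    (P Q ZP ZQ : Matrix (Fin N) (Fin N) ℝ)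
    (hPpd : P.PosDef) (hQpd : Q.PosDef)
    (hP : P = ZP * ZPᵀ) (hQ : Q = ZQ * ZQᵀ)
    (U V : Matrix (Fin N) (Fin N) ℝ) (d : Fin N → ℝ)
    (hU : Uᵀ * U = 1) (hUU : U * Uᵀ = 1)
    (hV : Vᵀ * V = 1) (hVV : V * Vᵀ = 1)
    (hd : ∀ i, 0 < d i)
    (hSVD : ZQᵀ * ZP = U * Matrix.diagonal d * Vᵀ) :
    letI Dinvhalf := Matrix.diagonal fun i => (Real.sqrt (d i))⁻¹
    letI T := Dinvhalf * Uᵀ * ZQᵀ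
    letI S := ZP * V * Dinvhalf
    T * S = 1 ∧ S = T⁻¹ ∧
      T * P * Tᵀ = Matrix.diagonal d ∧
      (T⁻¹)ᵀ * Q * T⁻¹ = Matrix.diagonal d := by
  set E := Matrix.diagonal fun i => (Real.sqrt (d i))⁻¹ with hE
  set T := E * Uᵀ * ZQᵀ with hT
  set S := ZP * V * E with hS
  set D := Matrix.diagonal d with hD
  have hsq : ∀ i, Real.sqrt (d i) * Real.sqrt (d i) = d i :=
    fun i => Real.mul_self_sqrt (hd i).le
  have hspos : ∀ i, 0 < Real.sqrt (d i) := fun i => Real.sqrt_pos.mpr (hd i)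
  have hEDE : E * (D * E) = 1 := by
    have hfun : (fun i => (Real.sqrt (d i))⁻¹ * (d i * (Real.sqrt (d i))⁻¹))
        = fun _ : Fin N => (1 : ℝ) := by
      funext i
      have hne := (hspos i).ne'
      rw [← hsq i]
      field_simp
      rw [Real.sqrt_sq (hspos i).le]
    rw [hE, hD, Matrix.diagonal_mul_diagonal, Matrix.diagonal_mul_diagonal,
      hfun, Matrix.diagonal_one]
  have hEDDE : E * (D * (D * E)) = D := by
    have hfun : (fun i => (Real.sqrt (d i))⁻¹ * (d i * (d i * (Real.sqrt (d i))⁻¹)))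
        = d := by
      funext i
      have hne := (hspos i).ne'
      rw [← hsq i]
      field_simp
      rw [Real.sqrt_sq (hspos i).le]
    rw [hE, hD, Matrix.diagonal_mul_diagonal, Matrix.diagonal_mul_diagonal,
      Matrix.diagonal_mul_diagonal, hfun]
  have keyU : ∀ X : Matrix (Fin N) (Fin N) ℝ, Uᵀ * (U * X) = X := fun X => by
    rw [← Matrix.mul_assoc, hU, Matrix.one_mul]
  have keyV : ∀ X : Matrix (Fin N) (Fin N) ℝ, Vᵀ * (V * X) = X := fun X => by
    rw [← Matrix.mul_assoc, hV, Matrix.one_mul]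
  have hSVD' : ∀ X : Matrix (Fin N) (Fin N) ℝ,
      ZQᵀ * (ZP * X) = U * (D * (Vᵀ * X)) := fun X => by
    rw [← Matrix.mul_assoc, hSVD]; simp [Matrix.mul_assoc]
  have hSVDT : ∀ X : Matrix (Fin N) (Fin N) ℝ,
      ZPᵀ * (ZQ * X) = V * (D * (Uᵀ * X)) := fun X => by
    have h : ZPᵀ * ZQ = V * D * Uᵀ := by
      have := congrArg Matrix.transpose hSVD
      simpa [Matrix.transpose_mul, Matrix.mul_assoc, hD, Matrix.diagonal_transpose] using this
    rw [← Matrix.mul_assoc, h]; simp [Matrix.mul_assoc]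
  have hSVD2 : ZQᵀ * ZP = U * (D * Vᵀ) := by rw [hSVD, Matrix.mul_assoc]
  have hTS : T * S = 1 := by
    rw [hT, hS]
    calc E * Uᵀ * ZQᵀ * (ZP * V * E)
        = E * (Uᵀ * (ZQᵀ * (ZP * (V * E)))) := by simp only [Matrix.mul_assoc]
      _ = E * (Uᵀ * (U * (D * (Vᵀ * (V * E))))) := by rw [hSVD' (V * E)]
      _ = E * (D * E) := by rw [keyU, keyV]
      _ = 1 := hEDE
  have hSinv : S = T⁻¹ := (Matrix.inv_eq_right_inv hTS).symm
  have hTPT : T * P * Tᵀ = D := by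
    rw [hT, hP]
    have hTt : (E * Uᵀ * ZQᵀ)ᵀ = ZQ * (U * E) := by
      simp [Matrix.transpose_mul, Matrix.diagonal_transpose, Matrix.mul_assoc, hE]
    rw [hTt]
    calc E * Uᵀ * ZQᵀ * (ZP * ZPᵀ) * (ZQ * (U * E))
        = E * (Uᵀ * (ZQᵀ * (ZP * (ZPᵀ * (ZQ * (U * E)))))) := by
          simp only [Matrix.mul_assoc]
      _ = E * (Uᵀ * (ZQᵀ * (ZP * (V * (D * (Uᵀ * (U * E))))))) := by
          rw [hSVDT (U * E)]
      _ = E * (Uᵀ * (ZQᵀ * (ZP * (V * (D * E))))) := by rw [keyU]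
      _ = E * (Uᵀ * (U * (D * (Vᵀ * (V * (D * E)))))) := by rw [hSVD' (V * (D * E))]
      _ = E * (D * (D * E)) := by rw [keyU, keyV]
      _ = D := hEDDE
  have hSQS : Sᵀ * Q * S = D := by
    rw [hQ]
    have hSt : Sᵀ = E * (Vᵀ * ZPᵀ) := by
      rw [hS]
      simp [Matrix.transpose_mul, Matrix.diagonal_transpose, Matrix.mul_assoc, hE]
    rw [hSt, hS]
    calc E * (Vᵀ * ZPᵀ) * (ZQ * ZQᵀ) * (ZP * V * E)
        = E * (Vᵀ * (ZPᵀ * (ZQ * (ZQᵀ * (ZP * (V * E)))))) := by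
          simp only [Matrix.mul_assoc]
      _ = E * (Vᵀ * (ZPᵀ * (ZQ * (U * (D * (Vᵀ * (V * E))))))) := by
          rw [hSVD' (V * E)]
      _ = E * (Vᵀ * (ZPᵀ * (ZQ * (U * (D * E))))) := by rw [keyV]
      _ = E * (Vᵀ * (V * (D * (Uᵀ * (U * (D * E))))))  := by rw [hSVDT (U * (D * E))]
      _ = E * (D * (D * E)) := by rw [keyV, keyU]
      _ = D := hEDDE
  exact ⟨hTS, hSinv, hTPT, by rw [← hSinv]; exact hSQS⟩
end

section
/- Let P, Q ∈ ℝ^{N×N} be symmetric positive definite with square-root factors P = Z_P·Z_Pᵀ and Q = Z_Q·Z_Qᵀ. Then the singular values of the matrix Z_Qᵀ·Z_P are exactly the square roots of the eigenvalues of P·Q, i.e. the Hankel singular values σᵢ = √(λᵢ(P·Q)). -/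
open Matrix Polynomial

lemma charmatrix_key {n : ℕ} (A B : Matrix (Fin n) (Fin n) ℝ) :
    charmatrix (A * B) * C.mapMatrix A = C.mapMatrix A * charmatrix (B * A) := by
  rw [charmatrix, charmatrix, sub_mul, mul_sub, _root_.map_mul C.mapMatrix A B, _root_.map_mul C.mapMatrix B A, mul_assoc]
  congr 1
  exact (Matrix.scalar_commute (X : ℝ[X]) (fun r' => Commute.all _ _) _).eq

lemma charpoly_mul_comm_of_det_ne_zero {n : ℕ} (A B : Matrix (Fin n) (Fin n) ℝ)
    (hA : A.det ≠ 0) : (A * B).charpoly = (B * A).charpoly := by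
  have h := congrArg Matrix.det (charmatrix_key A B)
  rw [Matrix.det_mul, Matrix.det_mul] at h
  rw [← (C : ℝ →+* ℝ[X]).map_det A] at h
  have hC : (C A.det : ℝ[X]) ≠ 0 := by simpa using hA
  unfold Matrix.charpoly
  exact mul_right_cancel₀ hC (by rw [h, mul_comm])

/-- The singular values of `Z_Qᵀ·Z_P` — that is, the square
roots of the eigenvalues of the Gram matrix `(Z_Qᵀ·Z_P)ᵀ·(Z_Qᵀ·Z_P)` — are
exactly the square roots of the eigenvalues of `P·Q` (the Hankel singular
values).  Eigenvalues are counted with multiplicity, as the multiset of roots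
of the characteristic polynomial. -/
theorem singular_values_of_factor_product {N : ℕ}
    (P Q ZP ZQ : Matrix (Fin N) (Fin N) ℝ)
    (hPpd : P.PosDef) (hQpd : Q.PosDef)
    (hP : P = ZP * ZPᵀ) (hQ : Q = ZQ * ZQᵀ) :
    ((ZQᵀ * ZP)ᵀ * (ZQᵀ * ZP)).charpoly.roots = (P * Q).charpoly.roots ∧
      Multiset.map Real.sqrt (((ZQᵀ * ZP)ᵀ * (ZQᵀ * ZP)).charpoly.roots)
        = Multiset.map Real.sqrt ((P * Q).charpoly.roots) := by
  have hZP : ZP.det ≠ 0 := by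
    have hpos := hPpd.det_pos
    rw [hP, Matrix.det_mul, Matrix.det_transpose] at hpos
    intro h
    rw [h] at hpos
    simp at hpos
  have key : ((ZQᵀ * ZP)ᵀ * (ZQᵀ * ZP)).charpoly = (P * Q).charpoly := by
    have h1 : (ZQᵀ * ZP)ᵀ * (ZQᵀ * ZP) = (ZPᵀ * Q) * ZP := by
      rw [hQ]; rw [Matrix.transpose_mul, Matrix.transpose_transpose]
      noncomm_ring
    have h2 : P * Q = ZP * (ZPᵀ * Q) := by rw [hP, mul_assoc]
    rw [h1, h2, charpoly_mul_comm_of_det_ne_zero ZP (ZPᵀ * Q) hZP]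
  rw [key]
  exact ⟨rfl, rfl⟩
end
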